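/- Let G be a connected unicyclic graph with unique cycle C, let x be a vertex outside C adjacent to a vertex y of C, and let T_x be the component of G − xy containing x (a tree). If x ∈ core(T_x), then α(G) + μ(G) = |V(G)|, i.e., G is a König–Egerváry graph. -/

import Mathlib

/-- A set of vertices is independent if no two of its vertices are adjacent. -/
def SimpleGraph.IsIndepSet' {V : Type*} (G : SimpleGraph V) (s : Set V) : Prop :=
  s.Pairwise (fun a b => ¬ G.Adj a b)

/-- The independence number: the maximum cardinality of an independent set. -/
noncomputable def indepNum {V : Type*} (G : SimpleGraph V) : ℕ :=
  sSup {n | ∃ s : Set V, G.IsIndepSet' s ∧ s.ncard = n}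

/-- The matching number: the maximum cardinality of a matching. -/
noncomputable def matchNum {V : Type*} (G : SimpleGraph V) : ℕ :=
  sSup {n | ∃ M : SimpleGraph.Subgraph G, M.IsMatching ∧ M.edgeSet.ncard = n}

/-- A maximum independent set. -/
def IsMaxIndepSet {V : Type*} (G : SimpleGraph V) (s : Set V) : Prop :=
  G.IsIndepSet' s ∧ s.ncard = indepNum G

/-- The core: intersection of all maximum independent sets. -/
noncomputable def core {V : Type*} (G : SimpleGraph V) : Set V :=
  ⋂₀ {s | IsMaxIndepSet G s}

/-- Open neighborhood of a set. -/
def nbhdSet {V : Type*} (G : SimpleGraph V) (s : Set V) : Set V :=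
  {v | ∃ w ∈ s, G.Adj v w}

/-- Closed neighborhood of a set. -/
def closedNbhdSet {V : Type*} (G : SimpleGraph V) (s : Set V) : Set V :=
  s ∪ nbhdSet G s

/-- The tree component of `G - xy` containing `x`. -/
noncomputable def treeComp {V : Type*} (G : SimpleGraph V) (x y : V) :
    SimpleGraph ((G.deleteEdges {s(x,y)}).connectedComponentMk x).supp :=
  (G.deleteEdges {s(x,y)}).induce ((G.deleteEdges {s(x,y)}).connectedComponentMk x).supp


/-!
Every graph satisfies `α + μ ≤ |V|`, since each matching edge has an endpoint outside a given
independent set. For the reverse inequality: a cycle of `G` missing some edge `e` of `C` is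
impossible, because `G - e` would be connected but not a tree, forcing `|E| > |V|`. Hence `xy` is a
bridge and deleting the edges at `y` leaves a forest. A forest is König–Egerváry, so the forest
`F` obtained by deleting the edges at `x` and `y` has an independent set `S` and a matching `M`
with `|S| + |M| ≥ |V|`. Adding `xy` to `M` pays for one of the vertices `x, y` removed from `S`;
the other is paid for by `x ∈ core(T_x)`: the part of `S \ {x, y}` inside `T_x` misses `x`, so it
is not maximum there, and swapping it for a maximum independent set of `T_x` gains a vertex.
-/

open Set
open SimpleGraph hiding indepNum

section Extremal
variable {V : Type*} [Finite V] {G : SimpleGraph V}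

lemma bddAbove_indepSet_ncard (G : SimpleGraph V) :
    BddAbove {n | ∃ s : Set V, G.IsIndepSet' s ∧ s.ncard = n} :=
  ⟨Nat.card V, by rintro _ ⟨s, -, rfl⟩; exact ncard_le_card s⟩

lemma bddAbove_matching_ncard (G : SimpleGraph V) :
    BddAbove {n | ∃ M : G.Subgraph, M.IsMatching ∧ M.edgeSet.ncard = n} :=
  ⟨Nat.card (Sym2 V), by rintro _ ⟨M, -, rfl⟩; exact ncard_le_card _⟩

lemma ncard_le_indepNum {s : Set V} (hs : G.IsIndepSet' s) : s.ncard ≤ indepNum G :=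
  le_csSup (bddAbove_indepSet_ncard G) ⟨s, hs, rfl⟩

lemma ncard_le_matchNum {M : G.Subgraph} (hM : M.IsMatching) : M.edgeSet.ncard ≤ matchNum G :=
  le_csSup (bddAbove_matching_ncard G) ⟨M, hM, rfl⟩

lemma exists_isMaxIndepSet (G : SimpleGraph V) : ∃ s : Set V, IsMaxIndepSet G s :=
  Nat.sSup_mem (s := {n | ∃ s : Set V, G.IsIndepSet' s ∧ s.ncard = n})
    ⟨0, ∅, by simp [SimpleGraph.IsIndepSet'], by simp⟩ (bddAbove_indepSet_ncard G)

lemma exists_isMatching_ncard_eq_matchNum (G : SimpleGraph V) :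
    ∃ M : G.Subgraph, M.IsMatching ∧ M.edgeSet.ncard = matchNum G :=
  Nat.sSup_mem (s := {n | ∃ M : G.Subgraph, M.IsMatching ∧ M.edgeSet.ncard = n})
    ⟨0, ⊥, fun _ hv => by simp at hv, by simp⟩ (bddAbove_matching_ncard G)

lemma ncard_lt_indepNum_of_mem_core {s : Set V} (hs : G.IsIndepSet' s) {v : V}
    (hv : v ∈ core G) (hvs : v ∉ s) : s.ncard < indepNum G :=
  (ncard_le_indepNum hs).lt_of_ne fun h => hvs (hv s ⟨hs, h⟩)

end Extremal

section KoenigEgervaryBound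
variable {V : Type*} {G : SimpleGraph V}

lemma ncard_add_ncard_edgeSet_le [Finite V] {S : Set V} (hS : G.IsIndepSet' S)
    {M : G.Subgraph} (hM : M.IsMatching) : S.ncard + M.edgeSet.ncard ≤ Nat.card V := by
  have hout : ∀ e : Sym2 V, ∃ v, e ∈ M.edgeSet → v ∈ e ∧ v ∉ S := by
    rintro ⟨a, b⟩
    by_cases ha : a ∈ S
    · exact ⟨b, fun hab => ⟨Sym2.mem_mk_right a b,
        fun hb => hS ha hb (M.adj_sub hab).ne (M.adj_sub hab)⟩⟩
    · exact ⟨a, fun _ => ⟨Sym2.mem_mk_left a b, ha⟩⟩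
  choose f hf using hout
  have hinj : InjOn f M.edgeSet := by
    intro e he e' he' hfee'
    have hv := (hf e he).1
    have hv' := hfee' ▸ (hf e' he').1
    generalize f e = v at hv hv'
    obtain ⟨w, rfl⟩ := Sym2.mem_iff_exists.mp hv
    obtain ⟨w', rfl⟩ := Sym2.mem_iff_exists.mp hv'
    rw [hM.eq_of_adj_left (Subgraph.mem_edgeSet.mp he) (Subgraph.mem_edgeSet.mp he')]
  have hle : M.edgeSet.ncard ≤ Sᶜ.ncard :=
    ncard_le_ncard_of_injOn f (fun e he => (hf e he).2) hinj
  have := ncard_add_ncard_compl S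
  omega

lemma indepNum_add_matchNum_le [Finite V] (G : SimpleGraph V) :
    indepNum G + matchNum G ≤ Nat.card V := by
  obtain ⟨S, hS, hScard⟩ := exists_isMaxIndepSet G
  obtain ⟨M, hM, hMcard⟩ := exists_isMatching_ncard_eq_matchNum G
  exact hScard ▸ hMcard ▸ ncard_add_ncard_edgeSet_le hS hM

end KoenigEgervaryBound

namespace SimpleGraph.Subgraph.IsMatching
variable {V : Type*} {H G : SimpleGraph V} {M : H.Subgraph}

lemma exists_ncard_edgeSet_eq_add_one [Finite V] (hM : M.IsMatching) (hHG : H ≤ G) {a b : V}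
    (hab : G.Adj a b) (ha : a ∉ M.verts) (hb : b ∉ M.verts) :
    ∃ M' : G.Subgraph, M'.IsMatching ∧ M'.edgeSet.ncard = M.edgeSet.ncard + 1 := by
  refine ⟨M.map (Hom.ofLE hHG) ⊔ G.subgraphOfAdj hab,
    (hM.map_ofLE hHG).sup (.subgraphOfAdj hab) ?_, ?_⟩
  · rw [(hM.map_ofLE hHG).support_eq_verts, (IsMatching.subgraphOfAdj hab).support_eq_verts]
    simp [ha, hb]
  · have hnot : s(a, b) ∉ M.edgeSet := fun h => ha (M.edge_vert h)
    rw [edgeSet_sup, edgeSet_map, edgeSet_subgraphOfAdj]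
    simp [ncard_insert_of_notMem hnot]

end SimpleGraph.Subgraph.IsMatching

namespace SimpleGraph.IsAcyclic
variable {V : Type*} [Finite V] {G : SimpleGraph V}

/-- The first vertex of a longest path is a leaf. -/
lemma exists_adj_forall_adj_eq (h : G.IsAcyclic) {u w : V} (huw : G.Adj u w) :
    ∃ v a, G.Adj v a ∧ ∀ b, G.Adj v b → b = a := by
  have : Nonempty V := ⟨u⟩
  obtain ⟨v, t, p, hp, hmax⟩ := Walk.exists_isPath_forall_isPath_length_le_length G
  have hnil : ¬p.Nil := Walk.not_nil_iff_lt_length.mpr <|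
    hmax _ _ (Walk.cons huw .nil) (Walk.IsPath.nil.cons (by simpa using huw.ne))
  refine ⟨v, p.snd, p.adj_snd hnil, fun b hb => h.eq_snd_of_adj_start hp hb ?_⟩
  by_contra hbp
  have := hmax _ _ (p.cons hb.symm) (hp.cons hbp)
  simp at this

/-- Peel off a leaf `v` with its neighbour `a`: `v` joins the independent set and `va` the
matching. -/
theorem exists_isIndepSet'_isMatching (h : G.IsAcyclic) :
    ∃ (S : Set V) (M : G.Subgraph), G.IsIndepSet' S ∧ M.IsMatching ∧
      Nat.card V ≤ S.ncard + M.edgeSet.ncard := by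
  induction hn : G.edgeSet.ncard using Nat.strong_induction_on generalizing G with
  | _ n ih =>
  by_cases hG : ∃ u w, G.Adj u w
  swap
  · push Not at hG
    exact ⟨univ, ⊥, fun a _ b _ _ => hG a b, fun _ hv => by simp at hv, by simp⟩
  obtain ⟨u, w, huw⟩ := hG
  obtain ⟨v, a, hva, hleaf⟩ := h.exists_adj_forall_adj_eq huw
  have hle := G.deleteIncidenceSet_le a
  have hlt : (G.deleteIncidenceSet a).edgeSet.ncard < n := by
    rw [← hn, edgeSet_deleteIncidenceSet]
    exact ncard_lt_ncard ⟨sdiff_subset, fun hsub => (hsub hva).2 ⟨hva, Sym2.mem_mk_right v a⟩⟩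
  obtain ⟨S', M', hS', hM', hcard⟩ := ih _ hlt (h.anti hle) rfl
  have hvM' : v ∉ M'.verts := fun hv => by
    obtain ⟨b, hvb, -⟩ := hM' hv
    have hvb' := deleteIncidenceSet_adj.mp (M'.adj_sub hvb)
    exact hvb'.2.2 (hleaf b hvb'.1)
  have haM' : a ∉ M'.verts := fun ha => by
    obtain ⟨b, hab, -⟩ := hM' ha
    exact (deleteIncidenceSet_adj.mp (M'.adj_sub hab)).2.1 rfl
  obtain ⟨M, hM, hMcard⟩ := hM'.exists_ncard_edgeSet_eq_add_one hle hva hvM' haM'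
  refine ⟨insert v (S' \ {a}), M, ?_, hM, ?_⟩
  · refine pairwise_insert.mpr ⟨fun b hb c hc hbc hGbc => hS' hb.1 hc.1 hbc ?_, ?_⟩
    · exact deleteIncidenceSet_adj.mpr ⟨hGbc, hb.2, hc.2⟩
    · exact fun b hb _ => ⟨fun hvb => hb.2 (hleaf b hvb), fun hbv => hb.2 (hleaf b hbv.symm)⟩
  · have h1 := ncard_le_ncard (subset_insert v (S' \ {a}))
    have h2 := ncard_le_ncard_sdiff_add_ncard S' {a}
    rw [ncard_singleton] at h2
    omega

end SimpleGraph.IsAcyclic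

namespace SimpleGraph
variable {V : Type*} [Finite V] {G : SimpleGraph V}

lemma Connected.card_lt_ncard_edgeSet_of_isCycle (hG : G.Connected) {u w : V} {c : G.Walk u u}
    (hc : c.IsCycle) {c' : G.Walk w w} (hc' : c'.IsCycle) {e : Sym2 V} (he : e ∈ c.edges)
    (he' : e ∉ c'.edges) : Nat.card V < G.edgeSet.ncard := by
  induction e using Sym2.ind with | _ a b =>
  have hGe := hG.connected_delete_edge_of_not_isBridge fun hb =>
    (isBridge_iff_forall_cycle_notMem (c.edges_subset_edgeSet he)).mp hb c hc he
  have hnot_tree : ¬(G.deleteEdges {s(a, b)}).IsTree := fun hT =>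
    hT.isAcyclic _ (hc'.toDeleteEdges G {s(a, b)} fun e he hab =>
      he' (mem_singleton_iff.mp hab ▸ he))
  have hcard := hGe.card_vert_le_card_edgeSet_add_one
  have hne : Nat.card (G.deleteEdges {s(a, b)}).edgeSet + 1 ≠ Nat.card V := fun h =>
    hnot_tree (isTree_iff_connected_and_card.mpr ⟨hGe, h⟩)
  have hlt : Nat.card (G.deleteEdges {s(a, b)}).edgeSet < G.edgeSet.ncard := by
    rw [Nat.card_coe_set_eq, edgeSet_deleteEdges]
    exact ncard_sdiff_singleton_lt_of_mem (c.edges_subset_edgeSet he)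
  omega

lemma isBridge_of_notMem_support (hG : G.Connected) (hcard : G.edgeSet.ncard ≤ Nat.card V)
    {u : V} {c : G.Walk u u} (hc : c.IsCycle) {x y : V} (hx : x ∉ c.support) (hxy : G.Adj x y) :
    G.IsBridge s(x, y) :=
  (isBridge_iff_forall_cycle_notMem hxy).mpr fun _ _ hp hxyp =>
    (hG.card_lt_ncard_edgeSet_of_isCycle hp hc hxyp
      fun h => hx (c.fst_mem_support_of_mem_edges h)).not_ge hcard

lemma isAcyclic_deleteIncidenceSet_of_mem_support (hG : G.Connected)
    (hcard : G.edgeSet.ncard ≤ Nat.card V) {u : V} {c : G.Walk u u} (hc : c.IsCycle) {y : V}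
    (hy : y ∈ c.support) :
    (G.deleteIncidenceSet y).IsAcyclic := by
  intro w p hp
  obtain ⟨e, he, hye⟩ := (Walk.mem_support_iff_exists_mem_edges_of_not_nil hc.not_nil).mp hy
  have he' : e ∉ (p.mapLe (G.deleteIncidenceSet_le y)).edges := by
    rw [Walk.edges_mapLe_eq_edges]
    intro hep
    have hep' := p.edges_subset_edgeSet hep
    rw [edgeSet_deleteIncidenceSet] at hep'
    exact hep'.2 ⟨hep'.1, hye⟩
  exact (hG.card_lt_ncard_edgeSet_of_isCycle hc (hp.mapLe _) he he').not_ge hcard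

end SimpleGraph

section TreeComponent
variable {V : Type*} {G : SimpleGraph V} {x y : V}

lemma mem_supp_deleteEdges_of_adj {a b : V}
    (ha : a ∈ ((G.deleteEdges {s(x, y)}).connectedComponentMk x).supp) (hab : G.Adj a b)
    (hby : b ≠ y) :
    b ∈ ((G.deleteEdges {s(x, y)}).connectedComponentMk x).supp := by
  rw [ConnectedComponent.mem_supp_iff] at ha ⊢
  by_cases he : s(a, b) = s(x, y)
  · rcases Sym2.eq_iff.mp he with ⟨-, rfl⟩ | ⟨-, rfl⟩
    · exact absurd rfl hby
    · rfl
  · rw [← ha, ConnectedComponent.eq]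
    exact (deleteEdges_adj.mpr ⟨hab, by simpa using he⟩).symm.reachable

lemma notMem_supp_of_isBridge (hxy : G.IsBridge s(x, y)) :
    y ∉ ((G.deleteEdges {s(x, y)}).connectedComponentMk x).supp := fun hy =>
  hxy (ConnectedComponent.eq.mp ((ConnectedComponent.mem_supp_iff _ _).mp hy)).symm

lemma treeComp_adj_of_adj (hxy : G.IsBridge s(x, y))
    {a b : ((G.deleteEdges {s(x, y)}).connectedComponentMk x).supp} (hab : G.Adj a b) :
    (treeComp G x y).Adj a b := by
  refine deleteEdges_adj.mpr ⟨hab, fun he => ?_⟩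
  have hyA := notMem_supp_of_isBridge hxy
  rcases Sym2.eq_iff.mp (mem_singleton_iff.mp he) with ⟨-, h : (b : V) = y⟩ | ⟨h : (a : V) = y, -⟩
  · exact hyA (mem_of_eq_of_mem h.symm b.2)
  · exact hyA (mem_of_eq_of_mem h.symm a.2)

lemma isIndepSet'_image_treeComp_union_sdiff (hxy : G.IsBridge s(x, y))
    {T : Set ((G.deleteEdges {s(x, y)}).connectedComponentMk x).supp}
    (hT : (treeComp G x y).IsIndepSet' T) {S : Set V} (hS : G.IsIndepSet' S) (hyS : y ∉ S) :
    G.IsIndepSet'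
      (Subtype.val '' T ∪ (S \ ((G.deleteEdges {s(x, y)}).connectedComponentMk x).supp)) := by
  rintro _ (⟨a, ha, rfl⟩ | ⟨ha, haA⟩) _ (⟨b, hb, rfl⟩ | ⟨hb, hbA⟩) hab hGab
  · exact hT ha hb (fun h => hab (congrArg _ h)) (treeComp_adj_of_adj hxy hGab)
  · exact hbA (mem_supp_deleteEdges_of_adj a.2 hGab (ne_of_mem_of_not_mem hb hyS))
  · exact haA (mem_supp_deleteEdges_of_adj b.2 hGab.symm (ne_of_mem_of_not_mem ha hyS))
  · exact hS ha hb hab hGab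

lemma ncard_lt_indepNum_of_mem_core_treeComp [Finite V] (hxy : G.IsBridge s(x, y))
    (hcore : (⟨x, rfl⟩ : ((G.deleteEdges {s(x, y)}).connectedComponentMk x).supp) ∈
      core (treeComp G x y))
    {S : Set V} (hS : G.IsIndepSet' S) (hxS : x ∉ S) (hyS : y ∉ S) : S.ncard < indepNum G := by
  set A := ((G.deleteEdges {s(x, y)}).connectedComponentMk x).supp
  have hSA : (treeComp G x y).IsIndepSet' (Subtype.val ⁻¹' S) := fun a ha b hb hab hadj =>
    hS ha hb (Subtype.val_injective.ne hab) (deleteEdges_le _ hadj)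
  have hSA_lt := ncard_lt_indepNum_of_mem_core hSA hcore hxS
  have hSA_card : (Subtype.val ⁻¹' S : Set A).ncard = (S ∩ A).ncard := by
    rw [← ncard_image_of_injective _ Subtype.val_injective, Subtype.image_preimage_coe,
      inter_comm]
  obtain ⟨T, hT, hTcard⟩ := exists_isMaxIndepSet (treeComp G x y)
  have hdisj : Disjoint (Subtype.val '' T) (S \ A) :=
    disjoint_left.mpr fun _ ⟨a, _, ha⟩ hS' => hS'.2 (ha ▸ a.2)
  calc S.ncard = (S ∩ A).ncard + (S \ A).ncard := (ncard_inter_add_ncard_sdiff_eq_ncard S A).symm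
    _ < indepNum (treeComp G x y) + (S \ A).ncard := by omega
    _ = (Subtype.val '' T ∪ (S \ A)).ncard := by
      rw [ncard_union_eq hdisj, ncard_image_of_injective _ Subtype.val_injective, hTcard]
    _ ≤ indepNum G := ncard_le_indepNum (isIndepSet'_image_treeComp_union_sdiff hxy hT hS hyS)

end TreeComponent

lemma exists_isIndepSet'_ncard_add_matchNum {V : Type*} [Finite V] {G : SimpleGraph V} {x y : V}
    (hacyc : (G.deleteIncidenceSet y).IsAcyclic) (hxy : G.Adj x y) :
    ∃ S : Set V, G.IsIndepSet' S ∧ x ∉ S ∧ y ∉ S ∧ Nat.card V ≤ S.ncard + matchNum G + 1 := by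
  have hHG := (deleteIncidenceSet_le _ x).trans (G.deleteIncidenceSet_le y)
  obtain ⟨S, M, hS, hM, hcard⟩ :=
    (hacyc.anti (deleteIncidenceSet_le _ x)).exists_isIndepSet'_isMatching
  have hxM : x ∉ M.verts := fun hx => by
    obtain ⟨b, hb, -⟩ := hM hx
    exact (deleteIncidenceSet_adj.mp (M.adj_sub hb)).2.1 rfl
  have hyM : y ∉ M.verts := fun hy => by
    obtain ⟨b, hb, -⟩ := hM hy
    exact (deleteIncidenceSet_adj.mp (deleteIncidenceSet_adj.mp (M.adj_sub hb)).1).2.1 rfl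
  obtain ⟨M', hM', hM'card⟩ := hM.exists_ncard_edgeSet_eq_add_one hHG hxy hxM hyM
  refine ⟨S \ {x, y}, fun a ha b hb hab hGab => hS ha.1 hb.1 hab ?_, fun h => h.2 (by simp),
    fun h => h.2 (by simp), ?_⟩
  · have ha' : a ≠ x ∧ a ≠ y := by simpa [not_or] using ha.2
    have hb' : b ≠ x ∧ b ≠ y := by simpa [not_or] using hb.2
    exact deleteIncidenceSet_adj.mpr ⟨deleteIncidenceSet_adj.mpr ⟨hGab, ha'.2, hb'.2⟩,
      ha'.1, hb'.1⟩
  · have h1 := ncard_le_matchNum hM'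
    have h2 := ncard_le_ncard_sdiff_add_ncard S {x, y}
    have h3 := ncard_insert_le x {y}
    rw [ncard_singleton] at h3
    omega

theorem stmt15 {V : Type*} [Fintype V] (G : SimpleGraph V)
    (hconn : G.Connected) (huni : G.edgeSet.ncard = Fintype.card V)
    {v : V} (c : G.Walk v v) (hc : c.IsCycle)
    (x y : V) (hx : x ∉ c.support) (hy : y ∈ c.support) (hadj : G.Adj x y)
    (hcore : (⟨x, rfl⟩ : ((G.deleteEdges {s(x,y)}).connectedComponentMk x).supp) ∈
      core (treeComp G x y)) :
    indepNum G + matchNum G = Fintype.card V := by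
  have hcard : G.edgeSet.ncard ≤ Nat.card V := (huni.trans Nat.card_eq_fintype_card.symm).le
  have hbridge := isBridge_of_notMem_support hconn hcard hc hx hadj
  obtain ⟨S, hS, hxS, hyS, hS_card⟩ := exists_isIndepSet'_ncard_add_matchNum
    (isAcyclic_deleteIncidenceSet_of_mem_support hconn hcard hc hy) hadj
  have hlt := ncard_lt_indepNum_of_mem_core_treeComp hbridge hcore hS hxS hyS
  have hle := indepNum_add_matchNum_le G
  rw [Nat.card_eq_fintype_card] at hle hS_card
  omega
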